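/- arXiv:1704.00133 — 9 statements merged into one kernel-verified Lean document; each statement's English description precedes it below -/
import Mathlib

section
/- Let N ≥ 1 and m ≥ 1, let M₀, M₁, …, M_m be N×N complex Hermitian matrices, and let v ∈ ℂ^N be nonzero. Suppose there exists μ ∈ ℝ^m such that H := M₀ + Σ_{j=1}^m μ_j M_j is positive semidefinite, satisfies H v = 0, and the kernel of the linear map x ↦ H x equals the one-dimensional span of v. Assume further that v* M_{j₀} v ≠ 0 for at least one index j₀ ∈ {1,…,m}. Then for every positive semidefinite Hermitian matrix X ∈ ℂ^{N×N} satisfying Tr(M_j X) = v* M_j v for all j = 1,…,m, one has Tr(M₀ X) ≥ Tr(M₀ v v*); moreover, if Tr(M₀ X) = Tr(M₀ v v*) then X = v v*. In other words, the rank-one lifted state v v* is the unique optimal solution of the SDP relaxation. -/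
/-!
Weak duality with the certificate `H = M₀ + ∑ μⱼ Mⱼ`. For a feasible `X` the constraints cancel
the multiplier terms and `H v = 0`, so `Tr(M₀ X) - Tr(M₀ v v*) = Tr(H X)`, which is nonnegative
for positive semidefinite `H` and `X` (write both as `Cᴴ C`, `Dᴴ D`: the trace is `‖C Dᴴ‖²`).
Equality forces `H X = 0`, so every column of `X` lies in `ker H = span v`; hermiticity makes `X`
a multiple of `v v*`, and the constraint `j₀` with `v* M_{j₀} v ≠ 0` pins the multiple to `1`.
-/
open Matrix ComplexOrder

open scoped MatrixOrder

namespace Matrix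

section PosSemidef

variable {n 𝕜 : Type*} [Fintype n] [RCLike 𝕜]

theorem trace_conjTranspose_mul_self_mul_conjTranspose_mul_self (C D : Matrix n n 𝕜) :
    (Cᴴ * C * (Dᴴ * D)).trace = ((C * Dᴴ)ᴴ * (C * Dᴴ)).trace := by
  rw [conjTranspose_mul, conjTranspose_conjTranspose, ← Matrix.mul_assoc, trace_mul_comm]
  simp only [Matrix.mul_assoc]

theorem PosSemidef.trace_mul_nonneg {A B : Matrix n n 𝕜} (hA : A.PosSemidef)
    (hB : B.PosSemidef) : 0 ≤ (A * B).trace := by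
  classical
  obtain ⟨C, rfl⟩ := CStarAlgebra.nonneg_iff_eq_star_mul_self.mp hA.nonneg
  obtain ⟨D, rfl⟩ := CStarAlgebra.nonneg_iff_eq_star_mul_self.mp hB.nonneg
  rw [star_eq_conjTranspose, star_eq_conjTranspose,
    trace_conjTranspose_mul_self_mul_conjTranspose_mul_self]
  exact (posSemidef_conjTranspose_mul_self _).trace_nonneg

theorem PosSemidef.trace_mul_eq_zero_iff {A B : Matrix n n 𝕜} (hA : A.PosSemidef)
    (hB : B.PosSemidef) : (A * B).trace = 0 ↔ A * B = 0 := by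
  classical
  refine ⟨fun h ↦ ?_, fun h ↦ by rw [h, trace_zero]⟩
  obtain ⟨C, rfl⟩ := CStarAlgebra.nonneg_iff_eq_star_mul_self.mp hA.nonneg
  obtain ⟨D, rfl⟩ := CStarAlgebra.nonneg_iff_eq_star_mul_self.mp hB.nonneg
  rw [star_eq_conjTranspose, star_eq_conjTranspose,
    trace_conjTranspose_mul_self_mul_conjTranspose_mul_self,
    trace_conjTranspose_mul_self_eq_zero_iff] at h
  rw [star_eq_conjTranspose, star_eq_conjTranspose, Matrix.mul_assoc, ← Matrix.mul_assoc C, h,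
    Matrix.zero_mul, Matrix.mul_zero]

end PosSemidef

theorem trace_mul_vecMulVec {n α : Type*} [Fintype n] [CommSemiring α] (A : Matrix n n α)
    (x y : n → α) : (A * vecMulVec x y).trace = y ⬝ᵥ (A *ᵥ x) := by
  rw [mul_vecMulVec, trace_vecMulVec, dotProduct_comm]

theorem trace_add_sum_smul_mul {ι n α : Type*} [Fintype ι] [Fintype n] [CommSemiring α]
    (A₀ : Matrix n n α) (A : ι → Matrix n n α) (c : ι → α) (X : Matrix n n α) :
    ((A₀ + ∑ j, c j • A j) * X).trace = (A₀ * X).trace + ∑ j, c j * (A j * X).trace := by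
  simp only [Matrix.add_mul, Finset.sum_mul, trace_add, trace_sum, smul_mul, trace_smul,
    smul_eq_mul]

theorem exists_eq_vecMulVec_of_mul_eq_zero {n α : Type*} [Fintype n] [CommSemiring α]
    {H X : Matrix n n α} {v : n → α} (hker : ∀ x, H *ᵥ x = 0 → ∃ c : α, x = c • v)
    (hHX : H * X = 0) : ∃ w, X = vecMulVec v w := by
  have hcol : ∀ i, ∃ c : α, Xᵀ i = c • v := fun i ↦
    hker _ (funext fun s ↦ by simpa [mulVec, dotProduct, mul_apply] using congrFun₂ hHX s i)
  choose w hw using hcol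
  exact ⟨w, ext fun s i ↦ by simpa [vecMulVec_apply, mul_comm] using congrFun (hw i) s⟩

theorem IsHermitian.exists_eq_smul_star_of_vecMulVec {n K : Type*} [Field K] [StarRing K]
    {v w : n → K} (h : (vecMulVec v w).IsHermitian) (hv : v ≠ 0) :
    ∃ d : K, w = d • star v := by
  obtain ⟨s, hs⟩ := Function.ne_iff.mp hv
  refine ⟨star (w s) / v s, funext fun i ↦ ?_⟩
  have hsi := h.apply s i
  simp only [vecMulVec_apply, star_mul', Pi.zero_apply] at hsi hs
  simp only [Pi.smul_apply, Pi.star_apply, smul_eq_mul]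
  field_simp
  linear_combination -hsi

end Matrix

theorem stmt_0_general (N m : ℕ)
    (M₀ : Matrix (Fin N) (Fin N) ℂ) (M : Fin m → Matrix (Fin N) (Fin N) ℂ)
    (v : Fin N → ℂ) (hv : v ≠ 0)
    (μ : Fin m → ℝ)
    (hPSD : (M₀ + ∑ j, (μ j : ℂ) • M j).PosSemidef)
    (hker : ∀ x : Fin N → ℂ,
      (M₀ + ∑ j, (μ j : ℂ) • M j) *ᵥ x = 0 ↔ ∃ c : ℂ, x = c • v)
    (j₀ : Fin m) (hj₀ : star v ⬝ᵥ (M j₀ *ᵥ v) ≠ 0) :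
    ∀ X : Matrix (Fin N) (Fin N) ℂ, X.PosSemidef →
      (∀ j, (M j * X).trace = star v ⬝ᵥ (M j *ᵥ v)) →
      ((M₀ * vecMulVec v (star v)).trace.re ≤ (M₀ * X).trace.re ∧
        ((M₀ * X).trace = (M₀ * vecMulVec v (star v)).trace →
          X = vecMulVec v (star v))) := by
  intro X hX hfeas
  set H := M₀ + ∑ j, (μ j : ℂ) • M j
  have hHv : H *ᵥ v = 0 := (hker v).2 ⟨1, (one_smul ℂ v).symm⟩
  have hgap : (M₀ * X).trace = (M₀ * vecMulVec v (star v)).trace + (H * X).trace := by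
    have hHX : (H * X).trace = (M₀ * X).trace + ∑ j, (μ j : ℂ) * (M j * X).trace :=
      trace_add_sum_smul_mul _ _ _ _
    have hHL : (H * vecMulVec v (star v)).trace =
        (M₀ * vecMulVec v (star v)).trace + ∑ j, (μ j : ℂ) * (M j * vecMulVec v (star v)).trace :=
      trace_add_sum_smul_mul _ _ _ _
    simp only [hfeas, trace_mul_vecMulVec, hHv, dotProduct_zero] at hHX hHL ⊢
    linear_combination hHL - hHX
  refine ⟨?_, fun heq ↦ ?_⟩
  · rw [hgap, Complex.add_re, le_add_iff_nonneg_right]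
    exact (Complex.nonneg_iff.mp (hPSD.trace_mul_nonneg hX)).1
  · have hHX : H * X = 0 :=
      (hPSD.trace_mul_eq_zero_iff hX).mp (by linear_combination heq - hgap)
    obtain ⟨w, rfl⟩ := exists_eq_vecMulVec_of_mul_eq_zero (fun x ↦ (hker x).mp) hHX
    obtain ⟨d, rfl⟩ := hX.isHermitian.exists_eq_smul_star_of_vecMulVec hv
    have hd : d = 1 := by
      have h := hfeas j₀
      rw [vecMulVec_smul, Matrix.mul_smul, trace_smul, trace_mul_vecMulVec, smul_eq_mul] at h
      exact mul_right_cancel₀ hj₀ (h.trans (one_mul _).symm)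
    rw [hd, one_smul]

theorem stmt_0 (N m : ℕ) (hN : 1 ≤ N) (hm : 1 ≤ m)
    (M₀ : Matrix (Fin N) (Fin N) ℂ) (M : Fin m → Matrix (Fin N) (Fin N) ℂ)
    (hM₀ : M₀.IsHermitian) (hM : ∀ j, (M j).IsHermitian)
    (v : Fin N → ℂ) (hv : v ≠ 0)
    (μ : Fin m → ℝ)
    (hPSD : (M₀ + ∑ j, (μ j : ℂ) • M j).PosSemidef)
    (hHv : (M₀ + ∑ j, (μ j : ℂ) • M j) *ᵥ v = 0)
    (hker : ∀ x : Fin N → ℂ,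
      (M₀ + ∑ j, (μ j : ℂ) • M j) *ᵥ x = 0 ↔ ∃ c : ℂ, x = c • v)
    (j₀ : Fin m) (hj₀ : star v ⬝ᵥ (M j₀ *ᵥ v) ≠ 0) :
    ∀ X : Matrix (Fin N) (Fin N) ℂ, X.PosSemidef →
      (∀ j, (M j * X).trace = star v ⬝ᵥ (M j *ᵥ v)) →
      ((M₀ * vecMulVec v (star v)).trace.re ≤ (M₀ * X).trace.re ∧
        ((M₀ * X).trace = (M₀ * vecMulVec v (star v)).trace →
          X = vecMulVec v (star v))) :=
  stmt_0_general N m M₀ M v hv μ hPSD hker j₀ hj₀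
end

section
/- Let N ≥ 1 and m ≥ 1, let M₀, M₁, …, M_m be N×N complex Hermitian matrices, and let v, v' ∈ ℂ^N be nonzero vectors. Suppose there exist μ, μ' ∈ ℝ^m such that H := M₀ + Σ_{j=1}^m μ_j M_j and H' := M₀ + Σ_{j=1}^m μ'_j M_j are both positive semidefinite, H v = 0 with ker(x ↦ H x) = span{v}, and H' v' = 0 with ker(x ↦ H' x) = span{v'}. Assume that v'* M_j v' = v* M_j v for all j = 1,…,m and that v* M_{j₀} v ≠ 0 for at least one index j₀. Then v' v'* = v v*, and consequently v' = c v for some complex scalar c with |c| = 1. In particular, the power flow solution satisfying the dual-certificate (angle) conditions is unique up to a global phase. -/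
/-! Write `H(ν) = M₀ + ∑ ν_j M_j`. Since `v` and `v'` have the same measurements `z* M_j z`,
`v'* H(μ) v' + v* H(μ') v = v* H(μ) v + v'* H(μ') v' = 0`. Both terms on the left are nonnegative,
so `v'* H(μ) v' = 0`, hence `H(μ) v' = 0` by semidefiniteness and `v' = c v`. Comparing the
measurement `j₀` gives `|c|² = 1`. -/

open Matrix ComplexOrder

theorem dotProduct_add_sum_smul_mulVec {ι n R : Type*} [Fintype ι] [Fintype n] [CommSemiring R]
    (A : Matrix n n R) (B : ι → Matrix n n R) (c : ι → R) (x y : n → R) :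
    y ⬝ᵥ ((A + ∑ j, c j • B j) *ᵥ x) = y ⬝ᵥ (A *ᵥ x) + ∑ j, c j * (y ⬝ᵥ (B j *ᵥ x)) := by
  simp only [add_mulVec, sum_mulVec, smul_mulVec, dotProduct_add, dotProduct_sum, dotProduct_smul,
    smul_eq_mul]

theorem star_dotProduct_pencil_exchange {ι n R : Type*} [Fintype ι] [Fintype n] [CommSemiring R]
    [StarRing R] (A : Matrix n n R) {B : ι → Matrix n n R} {x y : n → R}
    (h : ∀ j, star y ⬝ᵥ (B j *ᵥ y) = star x ⬝ᵥ (B j *ᵥ x)) (c d : ι → R) :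
    star y ⬝ᵥ ((A + ∑ j, c j • B j) *ᵥ y) + star x ⬝ᵥ ((A + ∑ j, d j • B j) *ᵥ x) =
      star x ⬝ᵥ ((A + ∑ j, c j • B j) *ᵥ x) + star y ⬝ᵥ ((A + ∑ j, d j • B j) *ᵥ y) := by
  simp only [dotProduct_add_sum_smul_mulVec, h]
  ring

theorem star_mul_self_eq_one_of_star_dotProduct_smul_mulVec {n R : Type*} [Fintype n] [CommRing R]
    [StarRing R] [NoZeroDivisors R]
    {A : Matrix n n R} {x : n → R} {c : R} (hx : star x ⬝ᵥ (A *ᵥ x) ≠ 0)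
    (h : star (c • x) ⬝ᵥ (A *ᵥ (c • x)) = star x ⬝ᵥ (A *ᵥ x)) :
    star c * c = 1 := by
  have hscale : star (c • x) ⬝ᵥ (A *ᵥ (c • x)) = (star c * c) * (star x ⬝ᵥ (A *ᵥ x)) := by
    rw [mulVec_smul, dotProduct_smul, star_smul, smul_dotProduct, smul_eq_mul, smul_eq_mul]
    ring
  rw [hscale] at h
  exact mul_left_eq_self₀.mp h |>.resolve_right hx

theorem vecMulVec_smul_star_smul {n R : Type*} [CommSemiring R] [StarRing R] {c : R}
    (hc : star c * c = 1) (x : n → R) :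
    vecMulVec (c • x) (star (c • x)) = vecMulVec x (star x) := by
  rw [star_smul, smul_vecMulVec, vecMulVec_smul, smul_smul, mul_comm, hc, one_smul]

theorem RCLike.norm_eq_one_of_star_mul_self {𝕜 : Type*} [RCLike 𝕜] {c : 𝕜} (hc : star c * c = 1) :
    ‖c‖ = 1 := by
  have hsq : (‖c‖ : 𝕜) ^ 2 = 1 := (RCLike.conj_mul c).symm.trans hc
  norm_cast at hsq
  exact (pow_eq_one_iff_of_nonneg (norm_nonneg c) two_ne_zero).mp hsq

theorem stmt_1_general (N m : ℕ)
    (M₀ : Matrix (Fin N) (Fin N) ℂ) (M : Fin m → Matrix (Fin N) (Fin N) ℂ)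
    (v v' : Fin N → ℂ)
    (μ μ' : Fin m → ℝ)
    (hPSD : (M₀ + ∑ j, (μ j : ℂ) • M j).PosSemidef)
    (hPSD' : (M₀ + ∑ j, (μ' j : ℂ) • M j).PosSemidef)
    (hHv : (M₀ + ∑ j, (μ j : ℂ) • M j) *ᵥ v = 0)
    (hker : ∀ x : Fin N → ℂ,
      (M₀ + ∑ j, (μ j : ℂ) • M j) *ᵥ x = 0 ↔ ∃ c : ℂ, x = c • v)
    (hHv' : (M₀ + ∑ j, (μ' j : ℂ) • M j) *ᵥ v' = 0)
    (hmeas : ∀ j, star v' ⬝ᵥ (M j *ᵥ v') = star v ⬝ᵥ (M j *ᵥ v))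
    (j₀ : Fin m) (hj₀ : star v ⬝ᵥ (M j₀ *ᵥ v) ≠ 0) :
    vecMulVec v' (star v') = vecMulVec v (star v) ∧
      ∃ c : ℂ, ‖c‖ = 1 ∧ v' = c • v := by
  have hsum := star_dotProduct_pencil_exchange M₀ hmeas (fun j => (μ j : ℂ)) (fun j => (μ' j : ℂ))
  rw [hHv, hHv', dotProduct_zero, dotProduct_zero, add_zero] at hsum
  have hv'H : star v' ⬝ᵥ ((M₀ + ∑ j, (μ j : ℂ) • M j) *ᵥ v') = 0 :=
    ((add_eq_zero_iff_of_nonneg (hPSD.dotProduct_mulVec_nonneg v')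
      (hPSD'.dotProduct_mulVec_nonneg v)).mp hsum).1
  obtain ⟨c, rfl⟩ := (hker v').mp ((hPSD.dotProduct_mulVec_zero_iff v').mp hv'H)
  have hc := star_mul_self_eq_one_of_star_dotProduct_smul_mulVec hj₀ (hmeas j₀)
  exact ⟨vecMulVec_smul_star_smul hc v, c, RCLike.norm_eq_one_of_star_mul_self hc, rfl⟩

theorem stmt_1 (N m : ℕ) (hN : 1 ≤ N) (hm : 1 ≤ m)
    (M₀ : Matrix (Fin N) (Fin N) ℂ) (M : Fin m → Matrix (Fin N) (Fin N) ℂ)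
    (hM₀ : M₀.IsHermitian) (hM : ∀ j, (M j).IsHermitian)
    (v v' : Fin N → ℂ) (hv : v ≠ 0) (hv' : v' ≠ 0)
    (μ μ' : Fin m → ℝ)
    (hPSD : (M₀ + ∑ j, (μ j : ℂ) • M j).PosSemidef)
    (hPSD' : (M₀ + ∑ j, (μ' j : ℂ) • M j).PosSemidef)
    (hHv : (M₀ + ∑ j, (μ j : ℂ) • M j) *ᵥ v = 0)
    (hker : ∀ x : Fin N → ℂ,
      (M₀ + ∑ j, (μ j : ℂ) • M j) *ᵥ x = 0 ↔ ∃ c : ℂ, x = c • v)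
    (hHv' : (M₀ + ∑ j, (μ' j : ℂ) • M j) *ᵥ v' = 0)
    (hker' : ∀ x : Fin N → ℂ,
      (M₀ + ∑ j, (μ' j : ℂ) • M j) *ᵥ x = 0 ↔ ∃ c : ℂ, x = c • v')
    (hmeas : ∀ j, star v' ⬝ᵥ (M j *ᵥ v') = star v ⬝ᵥ (M j *ᵥ v))
    (j₀ : Fin m) (hj₀ : star v ⬝ᵥ (M j₀ *ᵥ v) ≠ 0) :
    vecMulVec v' (star v') = vecMulVec v (star v) ∧
      ∃ c : ℂ, ‖c‖ = 1 ∧ v' = c • v :=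
  stmt_1_general N m M₀ M v v' μ μ' hPSD hPSD' hHv hker hHv' hmeas j₀ hj₀
end

section
/- Let y, m, v_s, v_t be complex numbers with v_s ≠ 0 and v_t ≠ 0, and suppose Im(v_s · conj(v_t) · conj(y)) > 0, Im(m · conj(y)) < 0, and Im(v_s · conj(v_t) · conj(m)) ≠ 0. Then there exist real numbers a, b, c such that the 2×2 complex Hermitian matrix H with entries H₁₁ = a + c·Re(y), H₁₂ = m − (c/2)·y, H₂₁ = conj(m) − (c/2)·conj(y), H₂₂ = b satisfies: (i) H · (v_s, v_t)ᵀ = 0, (ii) H is positive semidefinite, and (iii) the kernel of H is exactly the one-dimensional span of the vector (v_s, v_t) ∈ ℂ². -/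
open Matrix ComplexOrder

/-!
Put `w = v_s conj(v_t)`. Since `Im(w conj(y)) > 0`, the numbers `w` and `y` form a real basis
of `ℂ`, and Cramer's rule writes `m = c y - k w` with `k = -Im(m conj(y)) / Im(w conj(y)) > 0`.
Taking `2c` as the multiplier of `y` in `H` leaves the off-diagonal entry `-k w`, and the diagonal
can then be chosen so that `H = k u* u` for `u = (v_t, -v_s)`. This rank-one matrix is positive
semidefinite, and its kernel is `u^⊥`, the line spanned by `(v_s, v_t)`.
-/

theorem Complex.im_mul_star_mul_eq (w y m : ℂ) :
    ((w * star y).im : ℂ) * m = ((m * star y).im : ℂ) * w - ((m * star w).im : ℂ) * y := by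
  apply Complex.ext <;> simp [Complex.mul_re, Complex.mul_im] <;> ring

theorem Complex.exists_pos_sub_mul_eq_neg_mul {w y m : ℂ} (hwy : 0 < (w * star y).im)
    (hmy : (m * star y).im < 0) : ∃ k c : ℝ, 0 < k ∧ m - c * y = -k * w := by
  refine ⟨-(m * star y).im / (w * star y).im, -(m * star w).im / (w * star y).im,
    div_pos (neg_pos.2 hmy) hwy, ?_⟩
  have hd : ((w * star y).im : ℂ) ≠ 0 := by exact_mod_cast hwy.ne'
  have := Complex.im_mul_star_mul_eq w y m
  push_cast
  field_simp
  linear_combination this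

theorem Matrix.vecMulVec_mulVec_eq_zero_iff {K n : Type*} [Field K] [Fintype n]
    {u v : n → K} (hu : u ≠ 0) (x : n → K) : vecMulVec u v *ᵥ x = 0 ↔ v ⬝ᵥ x = 0 := by
  rw [vecMulVec_mulVec, smul_eq_zero, MulOpposite.op_eq_zero_iff]
  simp [hu]

theorem Matrix.cons_neg_dotProduct_eq_zero_iff_exists_smul {K : Type*} [Field K] {p q : K}
    (hp : p ≠ 0) (x : Fin 2 → K) : ![q, -p] ⬝ᵥ x = 0 ↔ ∃ d : K, x = d • ![p, q] := by
  constructor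
  · intro hx
    have hx : q * x 0 - p * x 1 = 0 := by
      simpa [dotProduct, Fin.sum_univ_two, ← sub_eq_add_neg] using hx
    refine ⟨x 0 / p, funext <| Fin.forall_fin_two.2 ⟨?_, ?_⟩⟩
    · simp [hp]
    · change x 1 = x 0 / p * q
      field_simp
      linear_combination -hx
  · rintro ⟨d, rfl⟩
    simp only [dotProduct, Fin.sum_univ_two, Pi.smul_apply, smul_eq_mul, cons_val_zero,
      cons_val_one, cons_val_fin_one]
    ring

theorem stmt_3_general (y m vs vt : ℂ) (hvs : vs ≠ 0)
    (h1 : 0 < (vs * star vt * star y).im)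
    (h2 : (m * star y).im < 0) :
    ∃ a b c : ℝ,
      let H : Matrix (Fin 2) (Fin 2) ℂ :=
        Matrix.of ![![(a : ℂ) + (c : ℂ) * (y.re : ℂ), m - ((c : ℂ) / 2) * y],
                    ![star m - ((c : ℂ) / 2) * star y, (b : ℂ)]]
      H *ᵥ ![vs, vt] = 0 ∧ H.PosSemidef ∧
        (∀ x : Fin 2 → ℂ, H *ᵥ x = 0 ↔ ∃ d : ℂ, x = d • ![vs, vt]) := by
  obtain ⟨k, c, hk, hm⟩ := Complex.exists_pos_sub_mul_eq_neg_mul h1 h2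
  refine ⟨k * Complex.normSq vt - 2 * c * y.re, k * Complex.normSq vs, 2 * c, ?_⟩
  intro H
  have hH : H = (k : ℂ) • vecMulVec (star ![vt, -vs]) ![vt, -vs] := by
    ext i j
    fin_cases i <;> fin_cases j <;> simp [H, Complex.normSq_eq_conj_mul_self]
    · rw [hm, Complex.star_def]; ring
    · simpa [mul_comm] using congrArg star hm
  have hker (x : Fin 2 → ℂ) : H *ᵥ x = 0 ↔ ∃ d : ℂ, x = d • ![vs, vt] := by
    rw [hH, ← smul_vecMulVec, vecMulVec_mulVec_eq_zero_iff,
      cons_neg_dotProduct_eq_zero_iff_exists_smul hvs]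
    simp [hk.ne', hvs]
  refine ⟨(hker _).2 ⟨1, (one_smul _ _).symm⟩, ?_, hker⟩
  rw [hH]
  exact (posSemidef_vecMulVec_star_self _).smul (by exact_mod_cast hk.le)

theorem stmt_3 (y m vs vt : ℂ) (hvs : vs ≠ 0) (hvt : vt ≠ 0)
    (h1 : 0 < (vs * star vt * star y).im)
    (h2 : (m * star y).im < 0)
    (h3 : (vs * star vt * star m).im ≠ 0) :
    ∃ a b c : ℝ,
      let H : Matrix (Fin 2) (Fin 2) ℂ :=
        Matrix.of ![![(a : ℂ) + (c : ℂ) * (y.re : ℂ), m - ((c : ℂ) / 2) * y],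
                    ![star m - ((c : ℂ) / 2) * star y, (b : ℂ)]]
      H *ᵥ ![vs, vt] = 0 ∧ H.PosSemidef ∧
        (∀ x : Fin 2 → ℂ, H *ᵥ x = 0 ↔ ∃ d : ℂ, x = d • ![vs, vt]) :=
  stmt_3_general y m vs vt hvs h1 h2
end

section
/- Let N ≥ 1, let v ∈ ℂ^N have all entries nonzero, and let G be a connected simple graph on the vertex set {1,…,N}. For each edge e = {s,t} of G, let H_e be an N×N complex Hermitian positive semidefinite matrix whose entries are zero outside the rows and columns indexed by s and t, such that H_e v = 0 and such that for every x ∈ ℂ^N, H_e x = 0 implies x_s v_t = x_t v_s. Then the sum H := Σ_e H_e over all edges of G is Hermitian positive semidefinite, satisfies H v = 0, and its kernel (as a linear map x ↦ H x) equals the one-dimensional span of v; equivalently, rank(H) = N − 1. -/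
/-!
A sum of positive semidefinite matrices annihilates `x` exactly when every summand does, since
`xᴴ (∑ Hₑ) x = ∑ xᴴ Hₑ x` is a sum of nonnegative terms. So `x` in the kernel of `H` satisfies
`x s / v s = x t / v t` across every edge `{s, t}`, and connectedness makes the ratio `x / v`
constant, i.e. `x` is a multiple of `v`.
-/

open Matrix ComplexOrder

theorem Matrix.sum_mulVec_eq_zero_iff_of_posSemidef {ι 𝕜 n : Type*} [RCLike 𝕜] [Fintype n]
    {A : ι → Matrix n n 𝕜} {s : Finset ι} (hA : ∀ i ∈ s, (A i).PosSemidef) (x : n → 𝕜) :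
    (∑ i ∈ s, A i) *ᵥ x = 0 ↔ ∀ i ∈ s, A i *ᵥ x = 0 := by
  rw [← (posSemidef_sum s hA).dotProduct_mulVec_zero_iff, sum_mulVec, dotProduct_sum,
    Finset.sum_eq_zero_iff_of_nonneg fun i hi => (hA i hi).dotProduct_mulVec_nonneg x]
  exact forall₂_congr fun i hi => (hA i hi).dotProduct_mulVec_zero_iff x

namespace SimpleGraph

variable {V : Type*} {G : SimpleGraph V}

theorem Reachable.eq_of_forall_adj_eq {β : Type*} {f : V → β}
    (hf : ∀ u w, G.Adj u w → f u = f w) {u w : V} (h : G.Reachable u w) : f u = f w := by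
  obtain ⟨p⟩ := h
  induction p with
  | nil => rfl
  | cons hadj _ ih => exact (hf _ _ hadj).trans ih

theorem Connected.exists_eq_smul_of_forall_adj {K : Type*} [Field K] (hG : G.Connected)
    {v x : V → K} (hv : ∀ i, v i ≠ 0) (hadj : ∀ s t, G.Adj s t → x s * v t = x t * v s) :
    ∃ c : K, x = c • v := by
  have hratio : ∀ s t, G.Adj s t → x s / v s = x t / v t := fun s t hst =>
    (div_eq_div_iff (hv s) (hv t)).mpr (hadj s t hst)
  obtain ⟨i₀⟩ := hG.nonempty
  refine ⟨x i₀ / v i₀, funext fun j => ?_⟩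
  rw [Pi.smul_apply, smul_eq_mul, (hG i₀ j).eq_of_forall_adj_eq hratio, div_mul_cancel₀ _ (hv j)]

end SimpleGraph

theorem stmt_4_general (N : ℕ) (v : Fin N → ℂ) (hv : ∀ i, v i ≠ 0)
    (G : SimpleGraph (Fin N)) [DecidableRel G.Adj] (hG : G.Connected)
    (H : Sym2 (Fin N) → Matrix (Fin N) (Fin N) ℂ)
    (hPSD : ∀ e ∈ G.edgeSet, (H e).PosSemidef)
    (hHv : ∀ e ∈ G.edgeSet, H e *ᵥ v = 0)
    (hkerE : ∀ e ∈ G.edgeSet, ∀ s t : Fin N, e = s(s, t) →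
      ∀ x : Fin N → ℂ, H e *ᵥ x = 0 → x s * v t = x t * v s) :
    (∑ e ∈ G.edgeFinset, H e).PosSemidef ∧
      (∑ e ∈ G.edgeFinset, H e) *ᵥ v = 0 ∧
      (∀ x : Fin N → ℂ,
        (∑ e ∈ G.edgeFinset, H e) *ᵥ x = 0 ↔ ∃ c : ℂ, x = c • v) := by
  have hPSD' : ∀ e ∈ G.edgeFinset, (H e).PosSemidef := fun e he =>
    hPSD e (G.mem_edgeFinset.mp he)
  have hsumv : (∑ e ∈ G.edgeFinset, H e) *ᵥ v = 0 := by
    rw [sum_mulVec]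
    exact Finset.sum_eq_zero fun e he => hHv e (G.mem_edgeFinset.mp he)
  refine ⟨posSemidef_sum _ hPSD', hsumv, fun x => ⟨fun hx => ?_, ?_⟩⟩
  · rw [sum_mulVec_eq_zero_iff_of_posSemidef hPSD'] at hx
    exact hG.exists_eq_smul_of_forall_adj hv fun s t hst =>
      hkerE _ hst s t rfl x (hx _ (G.mem_edgeFinset.mpr hst))
  · rintro ⟨c, rfl⟩
    rw [mulVec_smul, hsumv, smul_zero]

theorem stmt_4 (N : ℕ) (hN : 1 ≤ N) (v : Fin N → ℂ) (hv : ∀ i, v i ≠ 0)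
    (G : SimpleGraph (Fin N)) [DecidableRel G.Adj] (hG : G.Connected)
    (H : Sym2 (Fin N) → Matrix (Fin N) (Fin N) ℂ)
    (hPSD : ∀ e ∈ G.edgeSet, (H e).PosSemidef)
    (hsupp : ∀ e ∈ G.edgeSet, ∀ i j : Fin N, (i ∉ e ∨ j ∉ e) → H e i j = 0)
    (hHv : ∀ e ∈ G.edgeSet, H e *ᵥ v = 0)
    (hkerE : ∀ e ∈ G.edgeSet, ∀ s t : Fin N, e = s(s, t) →
      ∀ x : Fin N → ℂ, H e *ᵥ x = 0 → x s * v t = x t * v s) :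
    (∑ e ∈ G.edgeFinset, H e).PosSemidef ∧
      (∑ e ∈ G.edgeFinset, H e) *ᵥ v = 0 ∧
      (∀ x : Fin N → ℂ,
        (∑ e ∈ G.edgeFinset, H e) *ᵥ x = 0 ↔ ∃ c : ℂ, x = c • v) :=
  stmt_4_general N v hv G hG H hPSD hHv hkerE
end

section
/- Let N ≥ 1 and m ≥ 1, let M₀, M₁, …, M_m be N×N complex Hermitian matrices, let v ∈ ℂ^N, let σ₁,…,σ_m > 0, let η₁,…,η_m ∈ ℝ, and set z_j := v* M_j v + η_j. Suppose μ̂ ∈ ℝ^m is such that H := M₀ + Σ_{j=1}^m μ̂_j M_j satisfies H v = 0, and let ρ > 0 satisfy ρ ≥ max_{1≤j≤m} σ_j |μ̂_j|. Then every positive semidefinite Hermitian matrix X with Tr(M₀ X) + ρ Σ_{j=1}^m σ_j^{-1} |Tr(M_j X) − z_j| ≤ Tr(M₀ v v*) + ρ Σ_{j=1}^m σ_j^{-1} |η_j| satisfies Tr(H X) ≤ 2 ρ Σ_{j=1}^m σ_j^{-1} |η_j|. -/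
open Matrix ComplexOrder

theorem stmt_8 (N m : ℕ) (hN : 1 ≤ N) (hm : 1 ≤ m)
    (M₀ : Matrix (Fin N) (Fin N) ℂ) (M : Fin m → Matrix (Fin N) (Fin N) ℂ)
    (hM₀ : M₀.IsHermitian) (hM : ∀ j, (M j).IsHermitian)
    (v : Fin N → ℂ)
    (σ : Fin m → ℝ) (hσ : ∀ j, 0 < σ j)
    (η : Fin m → ℝ)
    (μhat : Fin m → ℝ)
    (hHv : (M₀ + ∑ j, (μhat j : ℂ) • M j) *ᵥ v = 0)
    (ρ : ℝ) (hρ : 0 < ρ) (hρge : ∀ j, σ j * |μhat j| ≤ ρ) :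
    ∀ X : Matrix (Fin N) (Fin N) ℂ, X.PosSemidef →
      ((M₀ * X).trace.re + ρ * ∑ j, (σ j)⁻¹ *
          ‖(M j * X).trace - (star v ⬝ᵥ (M j *ᵥ v) + (η j : ℂ))‖ ≤
        (M₀ * vecMulVec v (star v)).trace.re + ρ * ∑ j, (σ j)⁻¹ * |η j|) →
      ((M₀ + ∑ j, (μhat j : ℂ) • M j) * X).trace.re ≤
        2 * ρ * ∑ j, (σ j)⁻¹ * |η j| := by
  intro X hX hle
  set a : Fin m → ℂ := fun j => (M j * X).trace with ha
  set e : Fin m → ℂ := fun j => star v ⬝ᵥ (M j *ᵥ v) with he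
  -- bound on |μhat j|
  have hmu : ∀ j, |μhat j| ≤ ρ * (σ j)⁻¹ := by
    intro j
    rw [← div_eq_mul_inv, le_div_iff₀ (hσ j), mul_comm]
    exact hρge j
  -- expand trace of H * X
  have htr : ((M₀ + ∑ j, (μhat j : ℂ) • M j) * X).trace
      = (M₀ * X).trace + ∑ j, (μhat j : ℂ) * a j := by
    simp [add_mul, Finset.sum_mul, Matrix.smul_mul, ha]
  -- trace of A * v v* equals v* A v
  have trvv : ∀ A : Matrix (Fin N) (Fin N) ℂ,
      (A * vecMulVec v (star v)).trace = star v ⬝ᵥ (A *ᵥ v) := by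
    intro A
    simp only [Matrix.trace, Matrix.diag, Matrix.mul_apply, Matrix.vecMulVec_apply,
      dotProduct, Matrix.mulVec, Pi.star_apply, Finset.mul_sum]
    refine Finset.sum_congr rfl fun i _ => Finset.sum_congr rfl fun j _ => by ring
  have hvv : (M₀ * vecMulVec v (star v)).trace = star v ⬝ᵥ (M₀ *ᵥ v) := trvv M₀
  -- v* H v = 0
  have hv0 : (star v ⬝ᵥ (M₀ *ᵥ v)) + ∑ j, (μhat j : ℂ) * e j = 0 := by
    have h0 : ((M₀ + ∑ j, (μhat j : ℂ) • M j) * vecMulVec v (star v)).trace = 0 := by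
      rw [trvv, hHv, dotProduct_zero]
    have hexp : ((M₀ + ∑ j, (μhat j : ℂ) • M j) * vecMulVec v (star v)).trace
        = (M₀ * vecMulVec v (star v)).trace
          + ∑ j, (μhat j : ℂ) * (M j * vecMulVec v (star v)).trace := by
      simp [add_mul, Finset.sum_mul, Matrix.smul_mul]
    rw [hexp, hvv] at h0
    rw [← h0]
    congr 1
    exact Finset.sum_congr rfl fun j _ => by rw [trvv, he]
  -- real parts
  have hre : ((M₀ + ∑ j, (μhat j : ℂ) • M j) * X).trace.re
      = (M₀ * X).trace.re + ∑ j, μhat j * (a j).re := by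
    rw [htr, Complex.add_re, Complex.re_sum]
    simp [Complex.re_ofReal_mul]
  have hD : (M₀ * vecMulVec v (star v)).trace.re = - ∑ j, μhat j * (e j).re := by
    have h2 : (star v ⬝ᵥ (M₀ *ᵥ v)).re = - (∑ j, (μhat j : ℂ) * e j).re := by
      have := congrArg Complex.re hv0
      simp only [Complex.add_re, Complex.zero_re] at this
      linarith
    rw [hvv, h2, Complex.re_sum]
    simp [Complex.re_ofReal_mul]
  -- per-term bound
  have h3 : ∑ j, μhat j * (a j).re
      ≤ (ρ * ∑ j, (σ j)⁻¹ * ‖a j - (e j + (η j : ℂ))‖)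
        + (∑ j, μhat j * (e j).re) + ∑ j, μhat j * η j := by
    rw [Finset.mul_sum, ← Finset.sum_add_distrib, ← Finset.sum_add_distrib]
    apply Finset.sum_le_sum
    intro j _
    have hzre : (a j - (e j + (η j : ℂ))).re = (a j).re - (e j).re - η j := by
      simp [Complex.sub_re, Complex.add_re]
      ring
    have key : μhat j * ((a j).re - (e j).re - η j)
        ≤ ρ * ((σ j)⁻¹ * ‖a j - (e j + (η j : ℂ))‖) := by
      calc μhat j * ((a j).re - (e j).re - η j)
          ≤ |μhat j * ((a j).re - (e j).re - η j)| := le_abs_self _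
        _ = |μhat j| * |(a j - (e j + (η j : ℂ))).re| := by rw [abs_mul, hzre]
        _ ≤ (ρ * (σ j)⁻¹) * ‖a j - (e j + (η j : ℂ))‖ := by
            exact mul_le_mul (hmu j) (Complex.abs_re_le_norm _) (abs_nonneg _)
              (mul_nonneg hρ.le (inv_nonneg.2 (hσ j).le))
        _ = ρ * ((σ j)⁻¹ * ‖a j - (e j + (η j : ℂ))‖) := by ring
    nlinarith [key]
  have h4 : ∑ j, μhat j * η j ≤ ρ * ∑ j, (σ j)⁻¹ * |η j| := by
    rw [Finset.mul_sum]
    apply Finset.sum_le_sum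
    intro j _
    calc μhat j * η j ≤ |μhat j * η j| := le_abs_self _
      _ = |μhat j| * |η j| := abs_mul _ _
      _ ≤ (ρ * (σ j)⁻¹) * |η j| := by
          apply mul_le_mul_of_nonneg_right (hmu j) (abs_nonneg _)
      _ = ρ * ((σ j)⁻¹ * |η j|) := by ring
  rw [hre]
  linarith [hle, hD, h3, h4]
end

section
/- Let X be an N×N complex Hermitian positive semidefinite matrix and let v ∈ ℂ^N be a unit vector (‖v‖ = 1). Then ‖X v − (v* X v) v‖² ≤ (v* X v) · ( Tr(X) − v* X v ). -/
open Matrix ComplexOrder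

/-!
For a unit vector `v`, Pythagoras gives `‖Xv - (v*Xv) v‖² = ‖Xv‖² - (v*Xv)²`. Cauchy–Schwarz for
the semi-inner product `⟪x, y⟫ = x*Xy` bounds `|(Xv)ᵢ|² = |eᵢ*Xv|² ≤ Xᵢᵢ · v*Xv`, and summing over
`i` gives `‖Xv‖² ≤ Tr(X) · v*Xv`.
-/

namespace Matrix

variable {n : Type*} [Fintype n]

lemma PosSemidef.normSq_dotProduct_mulVec_le {X : Matrix n n ℂ} (hX : X.PosSemidef)
    (x y : n → ℂ) :
    Complex.normSq (star x ⬝ᵥ (X *ᵥ y)) ≤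
      (star x ⬝ᵥ (X *ᵥ x)).re * (star y ⬝ᵥ (X *ᵥ y)).re := by
  let _ := X.toSeminormedAddCommGroup hX
  let _ := X.toInnerProductSpace hX
  have inner_eq (x y : n → ℂ) : inner ℂ x y = star x ⬝ᵥ (X *ᵥ y) := dotProduct_comm _ _
  have h := inner_mul_inner_self_le (𝕜 := ℂ) x y
  rw [← inner_conj_symm y x, inner_eq, inner_eq, inner_eq, Complex.norm_conj] at h
  simpa [Complex.normSq_eq_norm_sq, sq] using h

lemma PosSemidef.sum_normSq_mulVec_le [DecidableEq n] {X : Matrix n n ℂ} (hX : X.PosSemidef)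
    (v : n → ℂ) :
    ∑ i, Complex.normSq ((X *ᵥ v) i) ≤ X.trace.re * (star v ⬝ᵥ (X *ᵥ v)).re := by
  calc ∑ i, Complex.normSq ((X *ᵥ v) i)
      ≤ ∑ i, (X i i).re * (star v ⬝ᵥ (X *ᵥ v)).re := by
        refine Finset.sum_le_sum fun i _ => ?_
        simpa using hX.normSq_dotProduct_mulVec_le (Pi.single i 1) v
    _ = X.trace.re * (star v ⬝ᵥ (X *ᵥ v)).re := by
        rw [← Finset.sum_mul, trace, Complex.re_sum]; rfl

end Matrix

lemma sum_normSq_sub_dotProduct_smul {n : Type*} [Fintype n] (u v : n → ℂ)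
    (hv : ∑ i, Complex.normSq (v i) = 1) :
    ∑ i, Complex.normSq ((u - (star v ⬝ᵥ u) • v) i) =
      ∑ i, Complex.normSq (u i) - Complex.normSq (star v ⬝ᵥ u) := by
  set α := star v ⬝ᵥ u
  have cross : ∑ i, u i * (starRingEnd ℂ) (α * v i) = α * (starRingEnd ℂ) α := by
    rw [mul_comm]
    simp only [α, dotProduct, Finset.mul_sum]
    refine Finset.sum_congr rfl fun i _ => ?_
    simp only [map_mul, Pi.star_apply, RCLike.star_def]
    ring
  simp only [Pi.sub_apply, Pi.smul_apply, smul_eq_mul, Complex.normSq_sub, Complex.normSq_mul,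
    Finset.sum_sub_distrib, Finset.sum_add_distrib, ← Finset.mul_sum, hv, ← Complex.re_sum, cross,
    Complex.mul_conj, mul_one, Complex.ofReal_re]
  ring

theorem stmt_10 (N : ℕ) (X : Matrix (Fin N) (Fin N) ℂ) (hX : X.PosSemidef)
    (v : Fin N → ℂ) (hv : ∑ i, Complex.normSq (v i) = 1) :
    ∑ i, Complex.normSq ((X *ᵥ v - (star v ⬝ᵥ (X *ᵥ v)) • v) i) ≤
      (star v ⬝ᵥ (X *ᵥ v)).re * (X.trace.re - (star v ⬝ᵥ (X *ᵥ v)).re) := by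
  have hα : Complex.normSq (star v ⬝ᵥ (X *ᵥ v)) = (star v ⬝ᵥ (X *ᵥ v)).re ^ 2 := by
    have him : (star v ⬝ᵥ (X *ᵥ v)).im = 0 := hX.isHermitian.im_star_dotProduct_mulVec_self v
    rw [Complex.normSq_apply, him]
    ring
  rw [sum_normSq_sub_dotProduct_smul _ _ hv, hα]
  linarith [hX.sum_normSq_mulVec_le v]
end

section
/- Let X be an N×N complex Hermitian positive semidefinite matrix and let v ∈ ℂ^N be a unit vector (‖v‖ = 1). Set α := v* X v (a nonnegative real number). Then ‖X − α · v v*‖_F² ≤ 2 · Tr(X) · ( Tr(X) − α ). -/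
/-!
Since `‖v‖ = 1`, expanding the square gives `‖X - α v v*‖_F² = ‖X‖_F² - α²`. The `2 × 2` principal
minors of a positive semidefinite matrix have nonnegative determinant, so `|X s t|² ≤ X s s * X t t`,
and summing gives `‖X‖_F² ≤ (Tr X)²`. Finally `T² - α² ≤ 2 T (T - α)` is `(T - α)² ≥ 0`.
-/

open Matrix ComplexOrder

namespace Matrix
variable {n 𝕜 : Type*} [RCLike 𝕜]

theorem PosSemidef.norm_apply_sq_le {A : Matrix n n 𝕜} (hA : A.PosSemidef) (i j : n) :
    ‖A i j‖ ^ 2 ≤ RCLike.re (A i i) * RCLike.re (A j j) := by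
  have hdet := (hA.submatrix ![i, j]).det_nonneg
  rw [det_fin_two] at hdet
  simp only [submatrix_apply, Matrix.cons_val_zero, Matrix.cons_val_one] at hdet
  rw [← hA.isHermitian.apply j i, ← hA.isHermitian.coe_re_apply_self i,
    ← hA.isHermitian.coe_re_apply_self j, RCLike.star_def, RCLike.mul_conj] at hdet
  exact_mod_cast sub_nonneg.mp hdet

variable [Fintype n]

theorem PosSemidef.sum_norm_apply_sq_le {A : Matrix n n 𝕜} (hA : A.PosSemidef) :
    ∑ i, ∑ j, ‖A i j‖ ^ 2 ≤ RCLike.re A.trace ^ 2 := by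
  rw [trace, map_sum, sq, Finset.sum_mul_sum]
  exact Finset.sum_le_sum fun i _ ↦ Finset.sum_le_sum fun j _ ↦ hA.norm_apply_sq_le i j

theorem star_dotProduct_mulVec_eq_sum (A : Matrix n n 𝕜) (v w : n → 𝕜) :
    star v ⬝ᵥ (A *ᵥ w) = ∑ i, ∑ j, star (v i) * A i j * w j := by
  simp only [dotProduct, mulVec, Finset.mul_sum, Pi.star_apply, mul_assoc]

theorem sum_norm_sub_smul_vecMulVec_sq (A : Matrix n n 𝕜) (a : ℝ) (v : n → 𝕜) :
    ∑ i, ∑ j, ‖(A - (a : 𝕜) • vecMulVec v (star v)) i j‖ ^ 2 =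
      ∑ i, ∑ j, ‖A i j‖ ^ 2 - 2 * a * RCLike.re (star v ⬝ᵥ (A *ᵥ v)) +
        a ^ 2 * (∑ i, ‖v i‖ ^ 2) ^ 2 := by
  have hpt : ∀ i j, ‖(A - (a : 𝕜) • vecMulVec v (star v)) i j‖ ^ 2 =
      ‖A i j‖ ^ 2 - 2 * a * RCLike.re (star (v i) * A i j * v j) +
        a ^ 2 * (‖v i‖ ^ 2 * ‖v j‖ ^ 2) := by
    intro i j
    rw [sub_apply, smul_apply, vecMulVec_apply, @norm_sub_sq 𝕜, smul_eq_mul, Pi.star_apply]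
    have hcross : RCLike.re (inner 𝕜 (A i j) ((a : 𝕜) * (v i * star (v j)))) =
        a * RCLike.re (star (v i) * A i j * v j) := by
      rw [RCLike.inner_apply', ← RCLike.conj_re]
      simp only [map_mul, RCLike.conj_conj, RCLike.conj_ofReal, RCLike.star_def]
      rw [← RCLike.re_ofReal_mul]
      ring_nf
    rw [hcross, norm_mul, norm_mul, norm_star, RCLike.norm_ofReal, ← sq_abs a]
    ring
  simp only [hpt, Finset.sum_add_distrib, Finset.sum_sub_distrib, ← Finset.mul_sum,
    ← Finset.sum_mul, star_dotProduct_mulVec_eq_sum, map_sum]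
  ring

end Matrix

theorem stmt_11 (N : ℕ) (X : Matrix (Fin N) (Fin N) ℂ) (hX : X.PosSemidef)
    (v : Fin N → ℂ) (hv : ∑ i, Complex.normSq (v i) = 1) :
    ∑ s, ∑ t, Complex.normSq
        ((X - (((star v ⬝ᵥ (X *ᵥ v)).re : ℝ) : ℂ) • vecMulVec v (star v)) s t) ≤
      2 * X.trace.re * (X.trace.re - (star v ⬝ᵥ (X *ᵥ v)).re) := by
  set α := (star v ⬝ᵥ (X *ᵥ v)).re
  simp only [Complex.normSq_eq_norm_sq] at hv ⊢
  calc ∑ s, ∑ t, ‖(X - (α : ℂ) • vecMulVec v (star v)) s t‖ ^ 2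
      = ∑ s, ∑ t, ‖X s t‖ ^ 2 - α ^ 2 := by
        have hexpand := sum_norm_sub_smul_vecMulVec_sq X α v
        rw [hv, RCLike.re_to_complex] at hexpand
        exact hexpand.trans (by ring)
    _ ≤ X.trace.re ^ 2 - α ^ 2 := by
        gcongr
        exact hX.sum_norm_apply_sq_le
    _ ≤ 2 * X.trace.re * (X.trace.re - α) := by
        linarith [sq_nonneg (X.trace.re - α)]
end

section
/- Let M ≥ 1, N ≥ 1 be integers and λ > 0, ρ > 0 real numbers, and let μ be the product measure on ℝ^M of M copies of the standard Gaussian measure on ℝ. Then for every t > 0, μ( { x ∈ ℝ^M : Σ_{j=1}^M |x_j| > N λ t² / (4ρ) } ) ≤ exp( M · ln 2 − N² λ² t⁴ / (32 M ρ²) ). Consequently, whenever the estimation error ζ of the penalized SDP satisfies ζ ≤ 2 √( ρ Σ_j |x_j| / (N λ) ), the event {ζ > t} has probability at most exp(−γ M) with γ = t⁴ λ² / (32 κ² ρ²) − ln 2, where κ = M/N. -/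
/-!
Chernoff's bound with parameter `s = a / M` applied to `∑ j, |x j|`. The coordinates are
independent, so its moment generating function is the `M`-th power of that of `|g|` for a
standard Gaussian `g`, and `e^{s|g|} ≤ e^{sg} + e^{-sg}` gives `𝔼 e^{s|g|} ≤ 2 e^{s²/2}`. Hence
`P(∑ j, |x j| ≥ a) ≤ e^{-sa} 2^M e^{Ms²/2} = exp (M log 2 - a² / (2M))`. The bound on `ζ` puts
`{ζ > t}` inside `{∑ j, |x j| > N λ t² / (4ρ)}`.
-/

open MeasureTheory ProbabilityTheory Real

lemma exp_mul_abs_le_add (t x : ℝ) : exp (t * |x|) ≤ exp (t * x) + exp (-t * x) := by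
  rcases abs_choice x with h | h <;> rw [h]
  · linarith [exp_pos (-t * x)]
  · rw [mul_neg, ← neg_mul]
    linarith [exp_pos (t * x)]

lemma mgf_abs_le_add {μ : Measure ℝ} {t : ℝ} (hpos : Integrable (fun x ↦ exp (t * x)) μ)
    (hneg : Integrable (fun x ↦ exp (-t * x)) μ) :
    mgf (fun x ↦ |x|) μ t ≤ mgf id μ t + mgf id μ (-t) := by
  simp only [mgf, id, ← integral_add hpos hneg]
  exact integral_mono (integrable_exp_mul_abs (X := id) hpos hneg) (hpos.add hneg)
    (exp_mul_abs_le_add t)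

lemma mgf_abs_gaussianReal_le (v : NNReal) (t : ℝ) :
    mgf (fun x ↦ |x|) (gaussianReal 0 v) t ≤ 2 * exp (v * t ^ 2 / 2) := by
  refine (mgf_abs_le_add (integrable_exp_mul_gaussianReal t)
    (integrable_exp_mul_gaussianReal (-t))).trans_eq ?_
  simp only [mgf_id_gaussianReal, zero_mul, zero_add, neg_sq]
  ring

section Product

variable {ι Ω : Type*} [Fintype ι] [MeasurableSpace Ω] (μ : Measure Ω) [IsProbabilityMeasure μ]
  {f : Ω → ℝ}

lemma mgf_sum_pi (hf : Measurable f) (t : ℝ) :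
    mgf (fun x : ι → Ω ↦ ∑ i, f (x i)) (Measure.pi fun _ ↦ μ) t =
      mgf f μ t ^ Fintype.card ι := by
  have hindep := iIndepFun_pi (μ := fun _ : ι ↦ μ) (X := fun _ ↦ f) fun _ ↦ hf.aemeasurable
  have hsum := hindep.mgf_sum (t := t) (fun i ↦ hf.comp (measurable_pi_apply i)) Finset.univ
  simp only [Finset.sum_fn] at hsum
  rw [hsum, Finset.prod_eq_pow_card fun i _ ↦ ?_, Finset.card_univ]
  exact mgf_congr_of_identDistrib _ _
    ⟨(hf.comp (measurable_pi_apply i)).aemeasurable, hf.aemeasurable,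
      by rw [← Measure.map_map hf (measurable_pi_apply i), (measurePreserving_eval _ i).map_eq]⟩ t

lemma integrable_exp_mul_sum_pi (hf : Measurable f) {t : ℝ}
    (h : Integrable (fun ω ↦ exp (t * f ω)) μ) :
    Integrable (fun x : ι → Ω ↦ exp (t * ∑ i, f (x i))) (Measure.pi fun _ ↦ μ) := by
  have hindep := iIndepFun_pi (μ := fun _ : ι ↦ μ) (X := fun _ ↦ f) fun _ ↦ hf.aemeasurable
  simpa only [Finset.sum_fn] using hindep.integrable_exp_mul_sum
    (fun i ↦ hf.comp (measurable_pi_apply i)) (s := Finset.univ)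
    fun i _ ↦ (measurePreserving_eval _ i).integrable_comp_of_integrable
      (g := fun ω ↦ exp (t * f ω)) h

end Product

section GaussianTail

variable {ι : Type*} [Fintype ι]

lemma measureReal_sum_abs_ge_le (v : NNReal) (a : ℝ) {t : ℝ} (ht : 0 ≤ t) :
    (Measure.pi fun _ : ι ↦ gaussianReal 0 v).real {x | a ≤ ∑ i, |x i|} ≤
      exp (-t * a) * (2 * exp (v * t ^ 2 / 2)) ^ Fintype.card ι := by
  have hint := integrable_exp_mul_sum_pi (ι := ι) (gaussianReal 0 v) continuous_abs.measurable
    (integrable_exp_mul_abs (integrable_exp_mul_gaussianReal t)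
      (integrable_exp_mul_gaussianReal (-t)))
  refine (measure_ge_le_exp_mul_mgf a ht hint).trans ?_
  rw [mgf_sum_pi _ continuous_abs.measurable]
  exact mul_le_mul_of_nonneg_left (pow_le_pow_left₀ mgf_nonneg (mgf_abs_gaussianReal_le v t) _)
    (exp_pos _).le

lemma measure_sum_abs_ge_le [Nonempty ι] {a : ℝ} (ha : 0 ≤ a) :
    (Measure.pi fun _ : ι ↦ gaussianReal 0 1) {x | a ≤ ∑ i, |x i|} ≤
      ENNReal.ofReal (exp (Fintype.card ι * log 2 - a ^ 2 / (2 * Fintype.card ι))) := by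
  have hn : (0 : ℝ) < Fintype.card ι := Nat.cast_pos.mpr Fintype.card_pos
  rw [← ofReal_measureReal]
  refine ENNReal.ofReal_le_ofReal
    ((measureReal_sum_abs_ge_le 1 a (div_nonneg ha hn.le)).trans_eq ?_)
  rw [← exp_log two_pos, ← exp_add, ← exp_nat_mul, ← exp_add, exp_log two_pos]
  congr 1
  field_simp
  push_cast
  ring

end GaussianTail

lemma mul_sq_div_lt_of_lt_two_mul_sqrt {b c t S : ℝ} (hb : 0 < b) (hc : 0 < c) (ht : 0 ≤ t)
    (h : t < 2 * √(b * S / c)) : c * t ^ 2 / (4 * b) < S := by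
  have hsq : (t / 2) ^ 2 < b * S / c := (lt_sqrt (by positivity)).mp (by linarith)
  rw [lt_div_iff₀ hc] at hsq
  rw [div_lt_iff₀ (by positivity)]
  linarith

theorem stmt_15 (M N : ℕ) (hM : 1 ≤ M) (hN : 1 ≤ N)
    (lam ρ : ℝ) (hlam : 0 < lam) (hρ : 0 < ρ) (t : ℝ) (ht : 0 < t) :
    Measure.pi (fun _ : Fin M => gaussianReal 0 1)
        {x : Fin M → ℝ | N * lam * t ^ 2 / (4 * ρ) < ∑ j, |x j|} ≤
      ENNReal.ofReal
        (Real.exp (M * Real.log 2 - N ^ 2 * lam ^ 2 * t ^ 4 / (32 * M * ρ ^ 2))) ∧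
    ∀ ζ : (Fin M → ℝ) → ℝ,
      (∀ x : Fin M → ℝ, ζ x ≤ 2 * Real.sqrt (ρ * (∑ j, |x j|) / (N * lam))) →
      Measure.pi (fun _ : Fin M => gaussianReal 0 1) {x : Fin M → ℝ | t < ζ x} ≤
        ENNReal.ofReal
          (Real.exp (-(t ^ 4 * lam ^ 2 / (32 * ((M : ℝ) / N) ^ 2 * ρ ^ 2) -
            Real.log 2) * M)) := by
  have : Nonempty (Fin M) := Fin.pos_iff_nonempty.mp hM
  have tail := measure_sum_abs_ge_le (ι := Fin M) (a := N * lam * t ^ 2 / (4 * ρ)) (by positivity)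
  rw [Fintype.card_fin] at tail
  have tail' := (measure_mono (Set.ofPred_subset_ofPred.mpr fun x (hx : _ < _) ↦ hx.le)).trans tail
  refine ⟨tail'.trans_eq (by congr 3; ring), fun ζ hζ ↦ ?_⟩
  calc _ ≤ _ := measure_mono <| Set.ofPred_subset_ofPred.mpr fun x hx ↦
        mul_sq_div_lt_of_lt_two_mul_sqrt hρ (by positivity) ht.le (hx.trans_le (hζ x))
    _ ≤ _ := tail'
    _ = _ := by congr 2; field_simp; ring
end

section
/- Let N ≥ 2 and let T be a simple graph on the vertex set {1,…,N} that is a tree (connected and acyclic). Let M₀, M₁, …, M_m be N×N complex Hermitian matrices such that for every pair s ≠ t that is not an edge of T, the (s,t) entry of M_j is zero for all j = 0,1,…,m, and let z₁,…,z_m ∈ ℝ. Define S₁ := { X ∈ ℂ^{N×N} : X Hermitian positive semidefinite, Tr(M_j X) = z_j for all j = 1,…,m } and S₂ := { X ∈ ℂ^{N×N} : X Hermitian, Tr(M_j X) = z_j for all j = 1,…,m, and for every edge {s,t} of T the 2×2 matrix [[X_{ss}, X_{st}],[X_{ts}, X_{tt}]] is positive semidefinite }. Then the sets of attainable objective values {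 Tr(M₀ X) : X ∈ S₁ } and { Tr(M₀ X) : X ∈ S₂ } are equal; in particular, the infimum of Tr(M₀ X) over S₁ equals the infimum of Tr(M₀ X) over S₂. -/
/-!
A partial Hermitian matrix given on the diagonal and on the edges of a tree, whose 2×2 edge blocks
are positive semidefinite, has a positive semidefinite completion. Remove a leaf `b` with
neighbour `a` and complete the rest by induction; then let `b` be the copy of `a` scaled by
`λ = conj (X b a) / X a a`, which produces the entry `X b a`, and add the missing diagonal
mass `X b b - |X b a|² / X a a ≥ 0` at `(b, b)`. The coefficient matrices only see the diagonal
and the tree edges, so replacing an SOCP-feasible `X` by its completion changes no trace.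
-/

open Matrix ComplexOrder

namespace Matrix

theorem trace_mul_eq_of_eqOn_adj {V R : Type*} [Fintype V] [NonUnitalNonAssocSemiring R]
    (G : SimpleGraph V) {A X Y : Matrix V V R}
    (hA : ∀ s t, s ≠ t → ¬G.Adj s t → A s t = 0) (hdiag : ∀ s, Y s s = X s s)
    (hadj : ∀ s t, G.Adj s t → Y s t = X s t) :
    (A * Y).trace = (A * X).trace := by
  simp only [trace, diag, mul_apply]
  refine Finset.sum_congr rfl fun s _ => Finset.sum_congr rfl fun t _ => ?_
  by_cases hst : s = t
  · subst hst; rw [hdiag]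
  by_cases h : G.Adj s t
  · rw [hadj t s h.symm]
  · rw [hA s t hst h, zero_mul, zero_mul]

theorem normSq_le_re_mul_re_of_posSemidef_fin_two {a b c d : ℂ}
    (h : !![a, b; c, d].PosSemidef) : Complex.normSq b ≤ a.re * d.re := by
  have hc : c = star b := by simpa using (h.isHermitian.apply 1 0).symm
  have ha : a.im = 0 := (Complex.nonneg_iff.mp (h.diag_nonneg (i := 0))).2.symm
  have hd : d.im = 0 := (Complex.nonneg_iff.mp (h.diag_nonneg (i := 1))).2.symm
  have hdet := (Complex.nonneg_iff.mp h.det_nonneg).1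
  simp only [det_fin_two_of, hc, Complex.sub_re, Complex.mul_re, ha, hd, Complex.star_def,
    Complex.conj_re, Complex.conj_im] at hdet
  rw [Complex.normSq_apply]
  linarith

theorem PosSemidef.exists_extension_compl_singleton {V : Type*} [Fintype V] [DecidableEq V]
    {a b : V} (hab : a ≠ b) {Y : Matrix ({b}ᶜ : Set V) ({b}ᶜ : Set V) ℂ} (hY : Y.PosSemidef)
    {c d : ℂ} (hd : 0 ≤ d) (hc : Complex.normSq c ≤ d.re * (Y ⟨a, hab⟩ ⟨a, hab⟩).re) :
    ∃ Z : Matrix V V ℂ, Z.PosSemidef ∧ (∀ s t : ({b}ᶜ : Set V), Z s t = Y s t) ∧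
      Z b b = d ∧ Z b a = c := by
  set a' : ({b}ᶜ : Set V) := ⟨a, hab⟩
  set ρ := (Y a' a').re
  obtain ⟨hρ, hYa⟩ : 0 ≤ ρ ∧ Y a' a' = ρ := by
    obtain ⟨hre, him⟩ := Complex.nonneg_iff.mp (hY.diag_nonneg (i := a'))
    exact ⟨hre, Complex.ext rfl him.symm⟩
  obtain ⟨hd, hdre⟩ : 0 ≤ d.re ∧ d = d.re := by
    obtain ⟨hre, him⟩ := Complex.nonneg_iff.mp hd
    exact ⟨hre, Complex.ext rfl him.symm⟩
  let g : V → ({b}ᶜ : Set V) := fun u => if h : u = b then a' else ⟨u, h⟩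
  let w : V → ℂ := Function.update 1 b (star c / ρ)
  let δ : ℝ := d.re - Complex.normSq c / ρ
  have hδ : 0 ≤ δ := sub_nonneg.mpr (div_le_of_le_mul₀ hρ hd (by linarith))
  let Z := (diagonal w)ᴴ * Y.submatrix g g * diagonal w + diagonal (Pi.single b (δ : ℂ))
  have hZ (s t : V) :
      Z s t = star (w s) * Y (g s) (g t) * w t + diagonal (Pi.single b (δ : ℂ)) s t := by
    simp [Z, mul_diagonal, diagonal_mul]
  have hcρ : c / ρ * ρ = c := by
    rcases hρ.eq_or_lt with hρ0 | hρpos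
    · have hc0 : c = 0 := Complex.normSq_eq_zero.mp
        (le_antisymm (by simpa [← hρ0] using hc) (Complex.normSq_nonneg c))
      simp [hc0]
    · exact div_mul_cancel₀ c (Complex.ofReal_ne_zero.mpr hρpos.ne')
  have hgb : g b = a' := dif_pos rfl
  have hwb : w b = star c / ρ := Function.update_self _ _ _
  have hwb' : star (w b) = c / ρ := by simp [hwb]
  refine ⟨Z, ?_, fun s t => ?_, ?_, ?_⟩
  · exact ((hY.submatrix g).conjTranspose_mul_mul_same _).add
      (PosSemidef.diagonal (Pi.single_nonneg.mpr (Complex.zero_le_real.mpr hδ)))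
  · have hg : ∀ u : ({b}ᶜ : Set V), g u = u := fun u => dif_neg u.2
    have hw : ∀ u : ({b}ᶜ : Set V), w u = 1 := fun u => Function.update_of_ne u.2 _ _
    have hs : (s : V) ≠ b := s.2
    simp [hZ, hg, hw, diagonal_apply, hs]
  · rw [hZ, hgb, hYa, diagonal_apply_eq, Pi.single_eq_same, hwb', hcρ, hwb, hdre,
      ← mul_div_assoc, Complex.star_def, Complex.mul_conj]
    push_cast [δ]
    ring
  · rw [hZ, hgb, show g a = a' from dif_neg hab, hYa, hwb', hcρ,
      show w a = 1 from Function.update_of_ne hab _ _, diagonal_apply_ne _ hab.symm, mul_one,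
      add_zero]

end Matrix

namespace SimpleGraph

theorem IsTree.exists_posSemidef_completion {V : Type*} [Fintype V] [DecidableEq V]
    {G : SimpleGraph V} (hG : G.IsTree) {X : Matrix V V ℂ} (hX : X.IsHermitian)
    (hdiag : ∀ s, 0 ≤ X s s)
    (hadj : ∀ s t, G.Adj s t → Complex.normSq (X s t) ≤ (X s s).re * (X t t).re) :
    ∃ Y : Matrix V V ℂ, Y.PosSemidef ∧ (∀ s, Y s s = X s s) ∧
      ∀ s t, G.Adj s t → Y s t = X s t := by
  induction hn : Fintype.card V using Nat.strong_induction_on generalizing V with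
  | _ n ih =>
  rcases subsingleton_or_nontrivial V with hV | hV
  · exact ⟨diagonal fun s => X s s, PosSemidef.diagonal hdiag, fun s => diagonal_apply_eq _ _,
      fun s t h => (G.ne_of_adj h (Subsingleton.elim s t)).elim⟩
  classical
  obtain ⟨b, hb⟩ := hG.exists_vert_degree_one_of_nontrivial
  obtain ⟨a, hba, ha⟩ := degree_eq_one_iff_existsUnique_adj.mp hb
  have hG' : (G.induce {b}ᶜ).IsTree :=
    ⟨hG.connected.induce_compl_singleton_of_degree_eq_one hb, hG.isAcyclic.induce _⟩
  have hcard : Fintype.card ({b}ᶜ : Set V) < n :=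
    hn ▸ Fintype.card_subtype_lt (p := (· ∈ ({b}ᶜ : Set V))) (x := b) (by simp)
  obtain ⟨Y, hY, hYdiag, hYadj⟩ := ih _ hcard hG' (hX.submatrix _) (fun s => hdiag s)
    (fun s t h => hadj s t h) rfl
  obtain ⟨Z, hZ, hZY, hZb, hZba⟩ := hY.exists_extension_compl_singleton hba.ne.symm (hdiag b)
    (c := X b a) (by rw [hYdiag]; exact hadj b a hba)
  have hZdiag : ∀ s, Z s s = X s s := by
    intro s
    by_cases hs : s = b
    · rw [hs, hZb]
    · exact (hZY ⟨s, hs⟩ ⟨s, hs⟩).trans (hYdiag ⟨s, hs⟩)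
  refine ⟨Z, hZ, hZdiag, fun s t hst => ?_⟩
  by_cases hs : s = b
  · subst hs
    rw [ha t hst, hZba]
  by_cases ht : t = b
  · subst ht
    rw [ha s hst.symm, ← hZ.isHermitian.apply, hZba, hX.apply]
  · exact (hZY ⟨s, hs⟩ ⟨t, ht⟩).trans (hYadj ⟨s, hs⟩ ⟨t, ht⟩ hst)

end SimpleGraph

theorem stmt_16_general (N m : ℕ) (hN : 2 ≤ N)
    (T : SimpleGraph (Fin N)) (hT : T.IsTree)
    (M₀ : Matrix (Fin N) (Fin N) ℂ) (M : Fin m → Matrix (Fin N) (Fin N) ℂ)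
    (hsupp₀ : ∀ s t : Fin N, s ≠ t → ¬ T.Adj s t → M₀ s t = 0)
    (hsupp : ∀ j, ∀ s t : Fin N, s ≠ t → ¬ T.Adj s t → M j s t = 0)
    (z : Fin m → ℝ) :
    {r : ℝ | ∃ X : Matrix (Fin N) (Fin N) ℂ, X.PosSemidef ∧
        (∀ j, (M j * X).trace = (z j : ℂ)) ∧ (M₀ * X).trace.re = r} =
      {r : ℝ | ∃ X : Matrix (Fin N) (Fin N) ℂ, X.IsHermitian ∧
        (∀ j, (M j * X).trace = (z j : ℂ)) ∧
        (∀ s t : Fin N, T.Adj s t →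
          (Matrix.of ![![X s s, X s t], ![X t s, X t t]]).PosSemidef) ∧
        (M₀ * X).trace.re = r} ∧
    sInf {r : ℝ | ∃ X : Matrix (Fin N) (Fin N) ℂ, X.PosSemidef ∧
        (∀ j, (M j * X).trace = (z j : ℂ)) ∧ (M₀ * X).trace.re = r} =
      sInf {r : ℝ | ∃ X : Matrix (Fin N) (Fin N) ℂ, X.IsHermitian ∧
        (∀ j, (M j * X).trace = (z j : ℂ)) ∧
        (∀ s t : Fin N, T.Adj s t →
          (Matrix.of ![![X s s, X s t], ![X t s, X t t]]).PosSemidef) ∧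
        (M₀ * X).trace.re = r} := by
  refine (fun hset => ⟨hset, congrArg sInf hset⟩) (Set.ext fun r => ⟨?_, ?_⟩)
  · rintro ⟨X, hX, hz, hr⟩
    refine ⟨X, hX.isHermitian, hz, fun s t _ => ?_, hr⟩
    exact eta_fin_two (X.submatrix ![s, t] ![s, t]) ▸ hX.submatrix ![s, t]
  · rintro ⟨X, hX, hz, h2, hr⟩
    have : Nontrivial (Fin N) := Fin.nontrivial_iff_two_le.mpr hN
    have hdiag (s : Fin N) : 0 ≤ X s s := by
      have hs : s ∈ T.support := by simp [hT.connected.preconnected]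
      obtain ⟨t, hst⟩ := T.mem_support.mp hs
      exact (h2 s t hst).diag_nonneg (i := 0)
    obtain ⟨Y, hY, hYdiag, hYadj⟩ := hT.exists_posSemidef_completion hX hdiag
      fun s t hst => normSq_le_re_mul_re_of_posSemidef_fin_two (h2 s t hst)
    have htrace := fun A hA => trace_mul_eq_of_eqOn_adj T (A := A) hA hYdiag hYadj
    exact ⟨Y, hY, fun j => (htrace _ (hsupp j)).trans (hz j), by rw [htrace _ hsupp₀, hr]⟩

theorem stmt_16 (N m : ℕ) (hN : 2 ≤ N)
    (T : SimpleGraph (Fin N)) (hT : T.IsTree)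
    (M₀ : Matrix (Fin N) (Fin N) ℂ) (M : Fin m → Matrix (Fin N) (Fin N) ℂ)
    (hM₀ : M₀.IsHermitian) (hM : ∀ j, (M j).IsHermitian)
    (hsupp₀ : ∀ s t : Fin N, s ≠ t → ¬ T.Adj s t → M₀ s t = 0)
    (hsupp : ∀ j, ∀ s t : Fin N, s ≠ t → ¬ T.Adj s t → M j s t = 0)
    (z : Fin m → ℝ) :
    {r : ℝ | ∃ X : Matrix (Fin N) (Fin N) ℂ, X.PosSemidef ∧
        (∀ j, (M j * X).trace = (z j : ℂ)) ∧ (M₀ * X).trace.re = r} =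
      {r : ℝ | ∃ X : Matrix (Fin N) (Fin N) ℂ, X.IsHermitian ∧
        (∀ j, (M j * X).trace = (z j : ℂ)) ∧
        (∀ s t : Fin N, T.Adj s t →
          (Matrix.of ![![X s s, X s t], ![X t s, X t t]]).PosSemidef) ∧
        (M₀ * X).trace.re = r} ∧
    sInf {r : ℝ | ∃ X : Matrix (Fin N) (Fin N) ℂ, X.PosSemidef ∧
        (∀ j, (M j * X).trace = (z j : ℂ)) ∧ (M₀ * X).trace.re = r} =
      sInf {r : ℝ | ∃ X : Matrix (Fin N) (Fin N) ℂ, X.IsHermitian ∧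
        (∀ j, (M j * X).trace = (z j : ℂ)) ∧
        (∀ s t : Fin N, T.Adj s t →
          (Matrix.of ![![X s s, X s t], ![X t s, X t t]]).PosSemidef) ∧
        (M₀ * X).trace.re = r} :=
  stmt_16_general N m hN T hT M₀ M hsupp₀ hsupp z
end
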